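/- Let F_0(x,y) = 1/(1-y)² and define recursively F_r(x,y) = (F_{r-1}(x,x^r)·x^r − F_{r-1}(x,y)·y) / ((x^r − y)(1 − y)) as formal power series (or rational functions). Then F_r(x,y) = Σ_{k,j ≥ 0} α_r(k,j) x^k y^j, where α_r(k,j) counts pairs ((c_1,...,c_r),(d_0,...,d_r)) with 0 ≤ c_1 ≤ ⋯ ≤ c_r, Σ c_i = k, −j ≤ d_0 ≤ 0, d_0 ≤ d_1 ≤ ⋯ ≤ d_r, d_i ≤ c_i. -/

import Mathlib

/-- `alpha r k j` counts pairs `((c_1,…,c_r),(d_0,d_1,…,d_r))` with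
`0 ≤ c_1 ≤ ⋯ ≤ c_r`, `∑ c_i = k`, `-j ≤ d_0 ≤ 0`, `d_0 ≤ d_1 ≤ ⋯ ≤ d_r`,
and `d_i ≤ c_i` for `1 ≤ i ≤ r`. -/
noncomputable def alpha (r k j : ℕ) : ℕ :=
  Nat.card {p : (Fin r → ℕ) × (Fin (r + 1) → ℤ) //
    Monotone p.1 ∧ (∑ i, p.1 i) = k ∧
    -(j : ℤ) ≤ p.2 0 ∧ p.2 0 ≤ 0 ∧ Monotone p.2 ∧
    ∀ i : Fin r, p.2 i.succ ≤ (p.1 i : ℤ)}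

/-- The recursively defined functions `F_r(x,y)`:
`F_0(x,y) = 1/(1-y)²` and
`F_r(x,y) = (F_{r-1}(x,x^r)·x^r − F_{r-1}(x,y)·y) / ((x^r − y)(1 − y))`. -/
noncomputable def F {K : Type*} [Field K] : ℕ → K → K → K
  | 0, _, y => 1 / (1 - y) ^ 2
  | r + 1, x, y =>
      (F r x (x ^ (r + 1)) * x ^ (r + 1) - F r x y * y) / ((x ^ (r + 1) - y) * (1 - y))

/-!
Removing the first part `m = c_1` and the value `t = -d_0` from a pair counted by `α_{r+1}(k, j)`
and subtracting `m` from all remaining entries gives a pair counted by `α_r(k - (r+1)m, m + t)`.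
This is a bijection, so `α_{r+1}(k, j) = ∑_{t ≤ j} ∑_{m ≤ k/(r+1)} α_r(k - (r+1)m, m + t)`.
On generating functions, summing over `t ≤ j` divides by `1 - y`, the substitution
`k ↦ k + (r+1)m` produces `x^k X^m` with `X = x^(r+1)`, and regrouping `X^m y^t` along `m + t = n`
gives `(X^(n+1) - y^(n+1)) / (X - y)`: this is the recursion defining `F`. The coefficients grow
polynomially, so every series involved converges absolutely for `|x|, |y| < 1`.
-/

open Finset

def alphaSet (r k j : ℕ) : Set ((Fin r → ℕ) × (Fin (r + 1) → ℤ)) :=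
  {p | Monotone p.1 ∧ (∑ i, p.1 i) = k ∧ -(j : ℤ) ≤ p.2 0 ∧ p.2 0 ≤ 0 ∧ Monotone p.2 ∧
    ∀ i : Fin r, p.2 i.succ ≤ (p.1 i : ℤ)}

theorem alpha_eq_card (r k j : ℕ) : alpha r k j = Nat.card (alphaSet r k j) := rfl

theorem alphaSet_subset_Icc (r k j : ℕ) :
    alphaSet r k j ⊆ Set.Icc (0, fun _ => -(j : ℤ)) (fun _ => k, fun _ => (k : ℤ)) := by
  rintro ⟨c, d⟩ ⟨-, hsum, hj, h0, hd, hdc⟩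
  have hc : ∀ i, c i ≤ k := fun i => hsum ▸ single_le_sum (fun i _ => Nat.zero_le _) (mem_univ i)
  refine ⟨⟨fun i => Nat.zero_le _, fun i => hj.trans (hd (Fin.zero_le i))⟩, hc, fun i => ?_⟩
  cases i using Fin.cases with
  | zero => exact h0.trans (Int.natCast_nonneg k)
  | succ i => exact (hdc i).trans (Int.ofNat_le.2 (hc i))

instance (r k j : ℕ) : Finite (alphaSet r k j) := by
  classical exact ((Set.finite_Icc _ _).subset (alphaSet_subset_Icc r k j)).to_subtype

theorem alpha_le (r k j : ℕ) : alpha r k j ≤ (k + 1) ^ r * (k + j + 1) ^ (r + 1) := by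
  classical
  calc alpha r k j ≤ Nat.card (Set.Icc (0, fun _ => -(j : ℤ)) (fun _ => k, fun _ => (k : ℤ))) :=
        Nat.card_mono (Set.finite_Icc _ _) (alphaSet_subset_Icc r k j)
    _ = (k + 1) ^ r * (k + j + 1) ^ (r + 1) := by
        rw [Nat.card_eq_card_toFinset, Set.toFinset_Icc, card_Icc_prod, Pi.card_Icc, Pi.card_Icc]
        simp only [Pi.zero_apply, Nat.card_Icc, Int.card_Icc, prod_const, card_univ,
          Fintype.card_fin]
        congr 2
        omega

theorem alpha_le_pow (r k j : ℕ) : alpha r k j ≤ ((k + 1) * (j + 1)) ^ (2 * r + 1) := by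
  have hkj : k + j + 1 ≤ (k + 1) * (j + 1) := by nlinarith
  calc alpha r k j ≤ (k + 1) ^ r * (k + j + 1) ^ (r + 1) := alpha_le r k j
    _ ≤ ((k + 1) * (j + 1)) ^ r * ((k + 1) * (j + 1)) ^ (r + 1) := by
        gcongr
        exact Nat.le_mul_of_pos_right _ (Nat.succ_pos j)
    _ = ((k + 1) * (j + 1)) ^ (2 * r + 1) := by ring

theorem Fin.monotone_cons {α : Type*} [Preorder α] {n : ℕ} {a : α} {f : Fin n → α}
    (hf : Monotone f) (ha : ∀ i, a ≤ f i) : Monotone (Fin.cons a f : Fin (n + 1) → α) := by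
  intro i i' hii'
  cases i' using Fin.cases with
  | zero => rw [Fin.le_zero_iff.1 hii']
  | succ i' =>
    cases i using Fin.cases with
    | zero => simpa using ha i'
    | succ i => simpa using hf (Fin.succ_le_succ_iff.1 hii')

section Recursion

variable {r k j : ℕ}

theorem mem_alphaSet {c : Fin r → ℕ} {d : Fin (r + 1) → ℤ} :
    (c, d) ∈ alphaSet r k j ↔ Monotone c ∧ (∑ i, c i) = k ∧ -(j : ℤ) ≤ d 0 ∧ d 0 ≤ 0 ∧
      Monotone d ∧ ∀ i : Fin r, d i.succ ≤ (c i : ℤ) := Iff.rfl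

theorem head_mul_le_of_mem_alphaSet {c : Fin (r + 1) → ℕ} {d : Fin (r + 2) → ℤ}
    (h : (c, d) ∈ alphaSet (r + 1) k j) : c 0 * (r + 1) ≤ k := by
  obtain ⟨hc, hsum, -⟩ := mem_alphaSet.1 h
  simpa [hsum, mul_comm] using sum_le_sum (s := univ) fun i _ => hc (Fin.zero_le i)

theorem tail_mem_alphaSet {c : Fin (r + 1) → ℕ} {d : Fin (r + 2) → ℤ}
    (h : (c, d) ∈ alphaSet (r + 1) k j) :
    (fun i => c i.succ - c 0, fun i => d i.succ - c 0) ∈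
      alphaSet r (k - c 0 * (r + 1)) (c 0 + (-d 0).toNat) := by
  obtain ⟨hc, hsum, hj, h0, hd, hdc⟩ := mem_alphaSet.1 h
  have hc0 : ∀ i, c 0 ≤ c i := fun i => hc (Fin.zero_le i)
  have hd01 := hd (Fin.zero_le 1)
  have hd1 := hdc 0
  simp only [Fin.succ_zero_eq_one] at hd1
  refine mem_alphaSet.2 ⟨fun i i' h => Nat.sub_le_sub_right (hc (Fin.succ_le_succ_iff.2 h)) _,
    ?_, ?_, ?_, fun i i' h => Int.sub_le_sub_right (hd (Fin.succ_le_succ_iff.2 h)) _,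
    fun i => ?_⟩
  · rw [Fin.sum_univ_succ] at hsum
    rw [sum_tsub_distrib _ (fun i _ => hc0 i.succ)]
    simp only [sum_const, card_univ, Fintype.card_fin, smul_eq_mul]
    have : r * c 0 ≤ ∑ i : Fin r, c i.succ := by
      simpa using sum_le_sum (s := univ) (fun (i : Fin r) _ => hc0 i.succ)
    have : c 0 * (r + 1) = c 0 + r * c 0 := by ring
    omega
  · simp only [Fin.succ_zero_eq_one]; push_cast; omega
  · simp only [Fin.succ_zero_eq_one]; omega
  · have := hdc i.succ
    simp only [Nat.cast_sub (hc0 i.succ)]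
    omega

theorem cons_mem_alphaSet {t m : ℕ} {c : Fin r → ℕ} {d : Fin (r + 1) → ℤ}
    (hm : m * (r + 1) ≤ k) (ht : t ≤ j) (h : (c, d) ∈ alphaSet r (k - m * (r + 1)) (m + t)) :
    (Fin.cons m (fun i => c i + m), Fin.cons (-(t : ℤ)) (fun i => d i + m)) ∈
      alphaSet (r + 1) k j := by
  obtain ⟨hc, hsum, hj, h0, hd, hdc⟩ := mem_alphaSet.1 h
  refine mem_alphaSet.2 ⟨Fin.monotone_cons (fun i i' h => Nat.add_le_add_right (hc h) m)
    (fun _ => le_add_self), ?_, by simp; omega, by simp, Fin.monotone_cons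
      (fun i i' h => Int.add_le_add_right (hd h) m)
      (fun i => by have := hd (Fin.zero_le i); push_cast at hj; omega), fun i => ?_⟩
  · rw [Fin.sum_univ_succ]
    simp only [Fin.cons_zero, Fin.cons_succ, sum_add_distrib, hsum, sum_const, card_univ,
      Fintype.card_fin, smul_eq_mul]
    have : m * (r + 1) = m + r * m := by ring
    omega
  · cases i using Fin.cases with
    | zero => simp; omega
    | succ i => simpa using hdc i

end Recursion

def alphaSetSuccEquiv (r k j : ℕ) :
    alphaSet (r + 1) k j ≃
      Σ tm : Fin (j + 1) × Fin (k / (r + 1) + 1),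
        alphaSet r (k - tm.2 * (r + 1)) (tm.2 + tm.1) where
  toFun := fun ⟨⟨c, d⟩, hp⟩ =>
    have h := mem_alphaSet.1 hp
    ⟨(⟨(-d 0).toNat, by omega⟩,
      ⟨c 0, Nat.lt_succ_of_le <|
        (Nat.le_div_iff_mul_le r.succ_pos).2 (head_mul_le_of_mem_alphaSet hp)⟩),
      ⟨_, tail_mem_alphaSet hp⟩⟩
  invFun q := ⟨_, cons_mem_alphaSet
    ((Nat.mul_le_mul_right _ (Nat.lt_succ_iff.1 q.1.2.2)).trans (Nat.div_mul_le_self k (r + 1)))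
    (Nat.lt_succ_iff.1 q.1.1.2) q.2.2⟩
  left_inv p := by
    obtain ⟨⟨c, d⟩, hp⟩ := p
    obtain ⟨hc, -, -, h0, -, -⟩ := mem_alphaSet.1 hp
    ext i <;> cases i using Fin.cases <;> simp
    · exact Nat.sub_add_cancel (hc (Fin.zero_le _))
    · omega
  right_inv q := by
    obtain ⟨⟨t, m⟩, ⟨c, d⟩, hq⟩ := q
    refine Sigma.subtype_ext ?_ ?_ <;> simp

theorem alpha_succ (r k j : ℕ) :
    alpha (r + 1) k j =
      ∑ t ∈ range (j + 1), ∑ m ∈ range (k / (r + 1) + 1), alpha r (k - m * (r + 1)) (m + t) := by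
  rw [alpha_eq_card, Nat.card_congr (alphaSetSuccEquiv r k j), Nat.card_sigma,
    Fintype.sum_prod_type, ← Fin.sum_univ_eq_sum_range]
  simp_rw [← Fin.sum_univ_eq_sum_range (fun m => alpha r (k - m * (r + 1)) (m + _))]
  rfl

theorem alpha_zero_of_ne_zero {k : ℕ} (hk : k ≠ 0) (j : ℕ) : alpha 0 k j = 0 := by
  rw [alpha_eq_card, Set.eq_empty_of_forall_notMem (s := alphaSet 0 k j)
    fun p hp => hk (hp.2.1.symm.trans (by simp))]
  simp

theorem alpha_zero_zero (j : ℕ) : alpha 0 0 j = j + 1 := by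
  let e : alphaSet 0 0 j ≃ Set.Icc (-(j : ℤ)) 0 :=
    ((Equiv.uniqueProd _ _).trans (Equiv.funUnique (Fin 1) ℤ)).subtypeEquiv fun p => by
      simp [alphaSet, Subsingleton.monotone]
  rw [alpha_eq_card, Nat.card_congr e, Nat.card_eq_card_toFinset, Set.toFinset_Icc, Int.card_Icc]
  omega

theorem sub_mul_sum_antidiagonal_pow {R : Type*} [CommRing R] (X y : R) (n : ℕ) :
    (X - y) * ∑ q ∈ antidiagonal n, X ^ q.1 * y ^ q.2 = X ^ (n + 1) - y ^ (n + 1) := by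
  rw [Nat.sum_antidiagonal_eq_sum_range_succ (fun i j => X ^ i * y ^ j), mul_comm,
    ← geom_sum₂_mul]
  simp

section HasSum

variable {R : Type*} [CommRing R] [TopologicalSpace R] [IsTopologicalRing R] [T2Space R] {ι : Type*}

theorem one_sub_mul_eq_of_hasSum_sum_range {b : ι → ℕ → R} {y A B : R}
    (hA : HasSum (fun p : ι × ℕ => (∑ t ∈ range (p.2 + 1), b p.1 t) * y ^ p.2) A)
    (hB : HasSum (fun p : ι × ℕ => b p.1 p.2 * y ^ p.2) B) : (1 - y) * A = B := by
  let S (p : ι × ℕ) : R := ∑ t ∈ range (p.2 + 1), b p.1 t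
  let shifted : ι × ℕ → R
    | (_, 0) => 0
    | (i, n + 1) => S (i, n) * y ^ (n + 1)
  have hinj : Function.Injective fun p : ι × ℕ => (p.1, p.2 + 1) := by
    rintro ⟨i, n⟩ ⟨i', n'⟩ h
    simpa using h
  have hshift : HasSum shifted (y * A) := by
    refine (hinj.hasSum_iff ?_).1 ?_
    · rintro ⟨i, _ | n⟩ h
      · rfl
      · exact absurd ⟨(i, n), rfl⟩ h
    · have hcomp : shifted ∘ (fun p : ι × ℕ => (p.1, p.2 + 1)) = fun p => y * (S p * y ^ p.2) := by
        ext p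
        simp only [Function.comp_apply, shifted, pow_succ]
        ring
      rw [hcomp]
      exact hA.mul_left y
  have hdiff : (fun p => S p * y ^ p.2 - shifted p) = fun p => b p.1 p.2 * y ^ p.2 := by
    funext p
    obtain ⟨i, _ | n⟩ := p
    · simp [S, shifted]
    · simp only [S, shifted, sum_range_succ _ (n + 1)]
      ring
  have := hA.sub hshift
  rw [hdiff] at this
  rw [sub_mul, one_mul, hB.unique this]

def prodAntidiagonalEquiv (ι : Type*) : (Σ p : ι × ℕ, antidiagonal p.2) ≃ ι × ℕ × ℕ where
  toFun q := (q.1.1, q.2.1)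
  invFun p := ⟨(p.1, p.2.1 + p.2.2), ⟨p.2, HasAntidiagonal.mem_antidiagonal.2 rfl⟩⟩
  left_inv := by
    rintro ⟨⟨i, n⟩, ⟨q, hq⟩⟩
    rw [HasAntidiagonal.mem_antidiagonal] at hq
    subst hq
    rfl
  right_inv _ := rfl

theorem sub_mul_eq_of_hasSum_antidiagonal {c : ι → ℕ → R} {X y s a b : R}
    (hs : HasSum (fun p : ι × ℕ × ℕ => c p.1 (p.2.1 + p.2.2) * X ^ p.2.1 * y ^ p.2.2) s)
    (ha : HasSum (fun p : ι × ℕ => c p.1 p.2 * X ^ p.2) a)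
    (hb : HasSum (fun p : ι × ℕ => c p.1 p.2 * y ^ p.2) b) : (X - y) * s = X * a - y * b := by
  have hgroup :
      HasSum (fun p : ι × ℕ => c p.1 p.2 * ∑ q ∈ antidiagonal p.2, X ^ q.1 * y ^ q.2) s := by
    refine ((prodAntidiagonalEquiv ι).hasSum_iff.2 hs).sigma fun p => ?_
    rw [mul_sum, ← sum_coe_sort]
    convert hasSum_fintype _ using 2 with q
    obtain ⟨q, hq⟩ := q
    rw [HasAntidiagonal.mem_antidiagonal] at hq
    simp [prodAntidiagonalEquiv, hq, mul_assoc]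
  have hterm : (fun p : ι × ℕ => (X - y) * (c p.1 p.2 * ∑ q ∈ antidiagonal p.2, X ^ q.1 * y ^ q.2))
      = fun p => X * (c p.1 p.2 * X ^ p.2) - y * (c p.1 p.2 * y ^ p.2) := by
    ext p
    rw [mul_left_comm, sub_mul_sum_antidiagonal_pow]
    ring
  have := hgroup.mul_left (X - y)
  rw [hterm] at this
  exact this.unique ((ha.mul_left X).sub (hb.mul_left y))

theorem hasSum_sum_range_div {M : Type*} [AddCommMonoid M] [TopologicalSpace M] [ContinuousAdd M]
    [RegularSpace M] {d : ℕ} (hd : 0 < d) {g : ℕ → ℕ → ι → M} {s : M}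
    (hg : HasSum (fun p : ℕ × ℕ × ι => g (p.1 + p.2.1 * d) p.2.1 p.2.2) s) :
    HasSum (fun q : ℕ × ι => ∑ m ∈ range (q.1 / d + 1), g q.1 m q.2) s := by
  have hmem {m n : ℕ} : m ∈ range (n / d + 1) ↔ m * d ≤ n := by
    rw [mem_range, Nat.lt_succ_iff, Nat.le_div_iff_mul_le hd]
  let g' (q : (ℕ × ι) × ℕ) : M := if q.2 * d ≤ q.1.1 then g q.1.1 q.2 q.1.2 else 0
  have hinj : Function.Injective fun p : ℕ × ℕ × ι => ((p.1 + p.2.1 * d, p.2.2), p.2.1) := by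
    rintro ⟨k, m, i⟩ ⟨k', m', i'⟩ h
    simp only [Prod.mk.injEq] at h
    obtain ⟨⟨hk, rfl⟩, rfl⟩ := h
    simp_all
  have hg' : HasSum g' s := by
    refine (hinj.hasSum_iff fun q hq => if_neg fun hle => hq ⟨(q.1.1 - q.2 * d, q.2, q.1.2), ?_⟩).1
      (by convert hg using 1; ext p; simp)
    simp [Nat.sub_add_cancel hle]
  refine hg'.prod_fiberwise fun q => ?_
  rw [sum_congr rfl fun m hm => (if_pos (hmem.1 hm)).symm]
  exact hasSum_sum_of_ne_finset_zero fun m hm => if_neg (mt hmem.2 hm)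

end HasSum

theorem summable_succ_pow_mul_pow (N : ℕ) {z : ℝ} (hz : |z| < 1) :
    Summable fun n : ℕ => ((n : ℝ) + 1) ^ N * |z| ^ n := by
  have hpow (i : ℕ) : Summable fun n : ℕ => (n : ℝ) ^ i * |z| ^ n :=
    summable_pow_mul_geometric_of_norm_lt_one i (by simpa using hz)
  refine (summable_sum (s := range (N + 1)) fun i _ => (hpow i).mul_left (N.choose i : ℝ)).congr
    fun n => ?_
  rw [add_pow, sum_mul]
  exact sum_congr rfl fun i _ => by ring

noncomputable def alphaGF (r : ℕ) (x y : ℝ) : ℝ :=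
  ∑' p : ℕ × ℕ, (alpha r p.1 p.2 : ℝ) * x ^ p.1 * y ^ p.2

section GeneratingFunction

variable {x y : ℝ}

theorem summable_alphaGF (r : ℕ) (hx : |x| < 1) (hy : |y| < 1) :
    Summable fun p : ℕ × ℕ => (alpha r p.1 p.2 : ℝ) * x ^ p.1 * y ^ p.2 := by
  refine Summable.of_norm_bounded ((summable_succ_pow_mul_pow (2 * r + 1) hx).mul_of_nonneg
    (summable_succ_pow_mul_pow (2 * r + 1) hy) (fun _ => by positivity) fun _ => by positivity)
    fun p => ?_
  simp only [norm_mul, norm_pow, Real.norm_eq_abs, Nat.abs_cast]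
  calc (alpha r p.1 p.2 : ℝ) * |x| ^ p.1 * |y| ^ p.2
      ≤ (((p.1 : ℝ) + 1) * ((p.2 : ℝ) + 1)) ^ (2 * r + 1) * |x| ^ p.1 * |y| ^ p.2 := by
        gcongr
        exact_mod_cast alpha_le_pow r p.1 p.2
    _ = _ := by rw [mul_pow]; ring

theorem summable_alpha_add_mul_pow (r : ℕ) {X : ℝ} (hx : |x| < 1) (hX : |X| < 1) (hy : |y| < 1) :
    Summable fun p : ℕ × ℕ × ℕ =>
      (alpha r p.1 (p.2.1 + p.2.2) : ℝ) * x ^ p.1 * X ^ p.2.1 * y ^ p.2.2 := by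
  have hw := summable_succ_pow_mul_pow (2 * r + 1) hx |>.mul_of_nonneg
    ((summable_succ_pow_mul_pow (2 * r + 1) hX).mul_of_nonneg
      (summable_succ_pow_mul_pow (2 * r + 1) hy) (fun _ => by positivity) fun _ => by positivity)
    (fun _ => by positivity) fun _ => by positivity
  refine Summable.of_norm_bounded hw fun ⟨k, m, t⟩ => ?_
  have hcoeff : (alpha r k (m + t) : ℝ) ≤
      (((k : ℝ) + 1) * ((m : ℝ) + 1) * ((t : ℝ) + 1)) ^ (2 * r + 1) := by
    have : (k + 1) * (m + t + 1) ≤ (k + 1) * (m + 1) * (t + 1) := by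
      rw [mul_assoc]; gcongr; nlinarith
    exact_mod_cast (alpha_le_pow r k (m + t)).trans (Nat.pow_le_pow_left this _)
  simp only [norm_mul, norm_pow, Real.norm_eq_abs, Nat.abs_cast]
  calc (alpha r k (m + t) : ℝ) * |x| ^ k * |X| ^ m * |y| ^ t
      ≤ (((k : ℝ) + 1) * ((m : ℝ) + 1) * ((t : ℝ) + 1)) ^ (2 * r + 1) *
          |x| ^ k * |X| ^ m * |y| ^ t := by
        gcongr
    _ = _ := by rw [mul_pow, mul_pow]; ring

theorem hasSum_alphaGF (r : ℕ) (hx : |x| < 1) (hy : |y| < 1) :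
    HasSum (fun p : ℕ × ℕ => (alpha r p.1 p.2 : ℝ) * x ^ p.1 * y ^ p.2) (alphaGF r x y) :=
  (summable_alphaGF r hx hy).hasSum

theorem alphaGF_zero (x : ℝ) (hy : |y| < 1) : alphaGF 0 x y = 1 / (1 - y) ^ 2 := by
  have hsupp : Function.support (fun p : ℕ × ℕ => (alpha 0 p.1 p.2 : ℝ) * x ^ p.1 * y ^ p.2) ⊆
      Set.range fun j => (0, j) := by
    rintro ⟨k, j⟩ hp
    rcases eq_or_ne k 0 with rfl | hk
    · exact ⟨j, rfl⟩
    · simp [alpha_zero_of_ne_zero hk] at hp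
  rw [alphaGF, ← (Prod.mk_right_injective 0).tsum_eq hsupp]
  simpa [alpha_zero_zero, add_comm] using tsum_choose_mul_geometric_of_norm_lt_one (r := y) 1
    (by simpa using hy)

theorem alphaGF_succ (r : ℕ) (hx : |x| < 1) (hy : |y| < 1) :
    (x ^ (r + 1) - y) * (1 - y) * alphaGF (r + 1) x y =
      x ^ (r + 1) * alphaGF r x (x ^ (r + 1)) - y * alphaGF r x y := by
  have hX : |x ^ (r + 1)| < 1 := by rw [abs_pow]; exact pow_lt_one₀ (abs_nonneg x) hx r.succ_ne_zero
  obtain ⟨T, hT⟩ := summable_alpha_add_mul_pow r hx hX hy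
  let b (k t : ℕ) : ℝ :=
    ∑ m ∈ range (k / (r + 1) + 1), (alpha r (k - m * (r + 1)) (m + t) : ℝ) * x ^ k
  have hB : HasSum (fun p : ℕ × ℕ => b p.1 p.2 * y ^ p.2) T := by
    have := hasSum_sum_range_div (d := r + 1) (by omega) (g := fun K m t =>
      (alpha r (K - m * (r + 1)) (m + t) : ℝ) * x ^ K * y ^ t) (s := T) (by
        convert hT using 2 with p
        rw [Nat.add_sub_cancel, pow_add, ← pow_mul, mul_comm p.2.1]
        ring)
    simpa only [b, sum_mul] using this
  have hA : HasSum (fun p : ℕ × ℕ => (∑ t ∈ range (p.2 + 1), b p.1 t) * y ^ p.2)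
      (alphaGF (r + 1) x y) := by
    convert hasSum_alphaGF (r + 1) hx hy using 2 with p
    simp only [b, alpha_succ, Nat.cast_sum, sum_mul]
  have h1 := one_sub_mul_eq_of_hasSum_sum_range hA hB
  have h2 := sub_mul_eq_of_hasSum_antidiagonal (c := fun k n => (alpha r k n : ℝ) * x ^ k) hT
    (hasSum_alphaGF r hx hX) (hasSum_alphaGF r hx hy)
  linear_combination (x ^ (r + 1) - y) * h1 + h2

end GeneratingFunction

theorem stmt6 (r : ℕ) (x y : ℝ) (hx : |x| < 1) (hy : |y| < 1)
    (h : ∀ m : ℕ, 1 ≤ m → m ≤ r → x ^ m ≠ y) :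
    ∑' p : ℕ × ℕ, (alpha r p.1 p.2 : ℝ) * x ^ p.1 * y ^ p.2 = F r x y := by
  change alphaGF r x y = F r x y
  induction r generalizing y with
  | zero => exact alphaGF_zero x hy
  | succ r ih =>
    have hX : |x ^ (r + 1)| < 1 := by
      rw [abs_pow]; exact pow_lt_one₀ (abs_nonneg x) hx r.succ_ne_zero
    have hXy : x ^ (r + 1) - y ≠ 0 := sub_ne_zero.2 (h (r + 1) le_add_self le_rfl)
    have hy1 : 1 - y ≠ 0 := sub_ne_zero.2 fun h1 => by simp [← h1] at hy
    have hF_y : alphaGF r x y = F r x y := ih y hy fun m h1 h2 => h m h1 (h2.trans r.le_succ)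
    -- at `x = 0` the induction hypothesis fails for `y = x ^ (r + 1)`,
    -- but then the factor `x ^ (r + 1)` vanishes
    have hF_X : x ^ (r + 1) * alphaGF r x (x ^ (r + 1)) = x ^ (r + 1) * F r x (x ^ (r + 1)) := by
      rcases eq_or_ne x 0 with rfl | hx0
      · simp
      · rw [ih _ hX fun m h1 h2 hm => ?_]
        have := pow_lt_pow_right_of_lt_one₀ (abs_pos.2 hx0) hx (Nat.lt_succ_of_le h2)
        rw [← abs_pow, ← abs_pow, hm] at this
        exact lt_irrefl _ this
    rw [F, eq_div_iff (mul_ne_zero hXy hy1)]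
    linear_combination alphaGF_succ r hx hy + hF_X - y * hF_y
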